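/- arXiv:math/0505489 — 4 statements merged into one kernel-verified Lean document; each statement's English description precedes it below -/
import Mathlib

section
/- Explicit solution of the fluid-limit system (paper eqs. (3.29)–(3.31)): let k ≥ 1, let μ_1,…,μ_k > 0, let ϱ_j ∈ (0,1) for j = 1,…,k−1 and ϱ_k > 1. Define q(t) = (1 − 1/ϱ_k)(1 − e^{−ϱ_k μ_k t}), set x̃_k(t) = q(t), and for j = 1,…,k−1 set x̃_j(t) = (ϱ_j μ_j − μ_j) t − ϱ_j μ_j ∫_0^t q(s) ds. Then for every j = 1,…,k and every t ≥ 0, x̃_j(t) = ϱ_j μ_j ∫_0^t [ 1 − Σ_{l=1}^k Φ_s(x̃_l) ] ds − μ_j t. (In eq. (3.29) of the paper the last term is printed as +μ_j t; consistency with eqs. (3.14), (3.42) and (3.63) shows the intended sign is −μ_j t.) -/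
open Set MeasureTheory intervalIntegral Finset

/-
A nonincreasing path has zero reflection, and a nondecreasing path starting at 0 is its own
reflection. Each x̃_j with j < k is nonincreasing, since its slope ϱ_j μ_j − μ_j − ϱ_j μ_j q is
negative, while x̃_k = q is nondecreasing with q(0) = 0 because ϱ_k > 1. Hence
Σ_l Φ_s(x̃_l) = q(s), the equations for j < k hold by construction, and the one for j = k reduces
to q(t) = ϱ_k μ_k (t − ∫_0^t q) − μ_k t, which is checked by integrating the exponential.
-/

/-- The regulator `Ψ_t(X) = −inf_{s∈[0,t]} X(s)` (paper eq. (2.9)). -/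
noncomputable def Psi (X : ℝ → ℝ) (t : ℝ) : ℝ := -sInf (X '' Set.Icc 0 t)

/-- The Skorokhod reflection `Φ_t(X) = X(t) + Ψ_t(X)` (paper eq. (2.11)). -/
noncomputable def Phi (X : ℝ → ℝ) (t : ℝ) : ℝ := X t + Psi X t

lemma Phi_eq_sub_of_isLeast {X : ℝ → ℝ} {t m : ℝ} (h : IsLeast (X '' Icc 0 t) m) :
    Phi X t = X t - m := by
  rw [Phi, Psi, h.csInf_eq]; ring

lemma Phi_eq_sub_of_monotoneOn {X : ℝ → ℝ} {t : ℝ} (ht : 0 ≤ t) (hX : MonotoneOn X (Icc 0 t)) :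
    Phi X t = X t - X 0 :=
  Phi_eq_sub_of_isLeast (hX.map_isLeast (isLeast_Icc ht))

lemma Phi_eq_zero_of_antitoneOn {X : ℝ → ℝ} {t : ℝ} (ht : 0 ≤ t) (hX : AntitoneOn X (Icc 0 t)) :
    Phi X t = 0 := by
  rw [Phi_eq_sub_of_isLeast (hX.map_isGreatest (isGreatest_Icc ht)), sub_self]

lemma sum_Phi_eq_of_monotoneOn_of_antitoneOn {ι : Type*} [Fintype ι] {x : ι → ℝ → ℝ} {t : ℝ}
    (ht : 0 ≤ t) (i : ι) (hi : MonotoneOn (x i) (Icc 0 t))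
    (hj : ∀ j ≠ i, AntitoneOn (x j) (Icc 0 t)) :
    ∑ l, Phi (x l) t = x i t - x i 0 := by
  rw [Finset.sum_eq_single_of_mem i (mem_univ i) fun j _ hji ↦
    Phi_eq_zero_of_antitoneOn ht (hj j hji)]
  exact Phi_eq_sub_of_monotoneOn ht hi

lemma monotone_mul_one_sub_exp_neg {A c : ℝ} (hA : 0 ≤ A) (hc : 0 ≤ c) :
    Monotone fun t ↦ A * (1 - Real.exp (-(c * t))) := fun a b hab ↦ by
  have : Real.exp (-(c * b)) ≤ Real.exp (-(c * a)) := by gcongr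
  dsimp only
  gcongr

lemma integral_mul_one_sub_exp_neg (A : ℝ) {c : ℝ} (hc : c ≠ 0) (t : ℝ) :
    ∫ s in (0:ℝ)..t, A * (1 - Real.exp (-(c * s))) = A * (t - (1 - Real.exp (-(c * t))) / c) := by
  have hderiv : ∀ s ∈ uIcc 0 t, HasDerivAt (fun s ↦ A * (s + Real.exp (-(c * s)) / c))
      (A * (1 - Real.exp (-(c * s)))) s := by
    intro s _
    have hlin : HasDerivAt (fun s ↦ -(c * s)) (-c) s := by
      simpa using ((hasDerivAt_id s).const_mul c).fun_neg
    refine (((hasDerivAt_id' s).fun_add (hlin.exp.div_const c)).const_mul A).congr_deriv ?_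
    field_simp
    ring
  rw [integral_eq_sub_of_hasDerivAt hderiv ((by fun_prop : Continuous _).intervalIntegrable _ _)]
  simp only [mul_zero, neg_zero, Real.exp_zero, zero_add]
  field_simp
  ring

lemma one_sub_inv_mul_one_sub_exp_neg_eq {r m : ℝ} (hr : r ≠ 0) (hm : m ≠ 0) (t : ℝ) :
    (1 - 1 / r) * (1 - Real.exp (-(r * m * t))) =
      r * m * (t - ∫ s in (0:ℝ)..t, (1 - 1 / r) * (1 - Real.exp (-(r * m * s)))) - m * t := by
  rw [integral_mul_one_sub_exp_neg _ (mul_ne_zero hr hm)]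
  field_simp
  ring

lemma antitoneOn_mul_sub_mul_integral {f : ℝ → ℝ} (hf : ∀ s, 0 ≤ s → 0 ≤ f s)
    (hfi : ∀ t, IntervalIntegrable f volume 0 t) {a b : ℝ} (ha : a ≤ 0) (hb : 0 ≤ b) :
    AntitoneOn (fun t ↦ a * t - b * ∫ s in (0:ℝ)..t, f s) (Ici 0) := by
  intro u hu v _ huv
  have : ∫ s in (0:ℝ)..u, f s ≤ ∫ s in (0:ℝ)..v, f s :=
    integral_mono_interval le_rfl hu huv
      ((ae_restrict_mem measurableSet_Ioc).mono fun s hs ↦ hf s hs.1.le) (hfi v)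
  exact sub_le_sub (mul_le_mul_of_nonpos_left huv ha) (mul_le_mul_of_nonneg_left this hb)

/-- Explicit solution of the fluid-limit system (paper eqs. (3.29)–(3.31)).
The `k ≥ 1` stations are indexed by `Fin (n+1)`; the bottleneck is `Fin.last n`. -/
theorem explicit_solution_of_fluid_limit_system
    (n : ℕ) (μ ϱ : Fin (n+1) → ℝ)
    (hμ : ∀ j, 0 < μ j)
    (hϱ : ∀ j, j ≠ Fin.last n → 0 < ϱ j ∧ ϱ j < 1)
    (hϱk : 1 < ϱ (Fin.last n))
    (q : ℝ → ℝ)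
    (hq : ∀ t, q t = (1 - 1 / ϱ (Fin.last n)) *
      (1 - Real.exp (-(ϱ (Fin.last n) * μ (Fin.last n) * t))))
    (x : Fin (n+1) → ℝ → ℝ)
    (hxk : ∀ t, x (Fin.last n) t = q t)
    (hxj : ∀ j, j ≠ Fin.last n → ∀ t,
      x j t = (ϱ j * μ j - μ j) * t - ϱ j * μ j * ∫ s in (0:ℝ)..t, q s) :
    ∀ j, ∀ t ≥ (0:ℝ),
      x j t = ϱ j * μ j * (∫ s in (0:ℝ)..t, (1 - ∑ l, Phi (x l) s)) - μ j * t := by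
  set k := Fin.last n
  have hϱk0 : 0 < ϱ k := one_pos.trans hϱk
  have hq_eq : q = fun t ↦ (1 - 1 / ϱ k) * (1 - Real.exp (-(ϱ k * μ k * t))) := funext hq
  have hq_mono : Monotone q := hq_eq ▸ monotone_mul_one_sub_exp_neg
    (sub_nonneg.2 ((div_le_one hϱk0).2 hϱk.le)) (mul_pos hϱk0 (hμ k)).le
  have hq0 : q 0 = 0 := by simp [hq]
  have hq_int : ∀ t, IntervalIntegrable q volume 0 t := fun t ↦
    (hq_eq ▸ (by fun_prop : Continuous _) : Continuous q).intervalIntegrable 0 t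
  have hx_anti : ∀ j ≠ k, AntitoneOn (x j) (Ici 0) := fun j hj ↦ by
    rw [funext (hxj j hj)]
    exact antitoneOn_mul_sub_mul_integral (fun s hs ↦ hq0 ▸ hq_mono hs) hq_int
      (sub_nonpos.2 (mul_le_of_le_one_left (hμ j).le (hϱ j hj).2.le))
      (mul_pos (hϱ j hj).1 (hμ j)).le
  have hsum : ∀ s ≥ 0, ∑ l, Phi (x l) s = q s := fun s hs ↦ by
    rw [sum_Phi_eq_of_monotoneOn_of_antitoneOn hs k
      (by rw [funext hxk]; exact hq_mono.monotoneOn _)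
      fun j hj ↦ (hx_anti j hj).mono Icc_subset_Ici_self, hxk, hxk, hq0, sub_zero]
  intro j t ht
  have hint : ∫ s in (0:ℝ)..t, (1 - ∑ l, Phi (x l) s) = t - ∫ s in (0:ℝ)..t, q s := by
    rw [integral_congr (g := fun s ↦ 1 - q s) fun s hs ↦ ?_,
      integral_sub intervalIntegrable_const (hq_int t)]
    · simp
    · rw [uIcc_of_le ht] at hs
      simp only [hsum s hs.1]
  rw [hint]
  by_cases hj : j = k
  · subst hj
    rw [hxk, hq_eq]
    exact one_sub_inv_mul_one_sub_exp_neg_eq hϱk0.ne' (hμ k).ne' t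
  · rw [hxj j hj t]
    ring
end

section
/- Uniqueness for the fluid-limit system (asserted after paper eqs. (3.26)–(3.27)): let k ≥ 1, T > 0, μ_1,…,μ_k > 0 and ϱ_1,…,ϱ_k > 0. Suppose x = (x_1,…,x_k) and y = (y_1,…,y_k) are k-tuples of continuous functions [0,T] → ℝ with x_j(0) = y_j(0) = 0 which both satisfy, for every j = 1,…,k and t ∈ [0,T], the system x_j(t) = ϱ_j μ_j ∫_0^t [ 1 − Σ_{l=1}^k Φ_s(x_l) ] ds − μ_j t (and the same equations for y). Then x_j(t) = y_j(t) for all j and all t ∈ [0,T]. -/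
open Set MeasureTheory intervalIntegral Finset

/-!
Taking differences of the two integral equations, `x_j - y_j` is controlled by the integral of
`∑_l |Φ(x_l) - Φ(y_l)|`, and `Φ` is 2-Lipschitz for the running supremum norm. So
`e(t) = ∑_j |x_j(t) - y_j(t)|` satisfies `e ≤ g ⇒ e(t) ≤ K ∫_0^t g` for every nondecreasing
majorant `g`; starting from a constant bound and iterating (Picard) gives
`e(t) ≤ C (K t)^n / n!` for every `n`, hence `e = 0`.
-/

lemma csInf_image_le_csInf_image_add {α : Type*} {S : Set α} {X Y : α → ℝ} {b : ℝ}
    (hS : S.Nonempty) (hX : BddBelow (X '' S)) (hXY : ∀ u ∈ S, X u ≤ Y u + b) :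
    sInf (X '' S) ≤ sInf (Y '' S) + b := by
  rw [← sub_le_iff_le_add]
  refine le_csInf (hS.image Y) ?_
  rintro _ ⟨u, hu, rfl⟩
  linarith [csInf_le hX (mem_image_of_mem X hu), hXY u hu]

lemma abs_Psi_sub_Psi_le {X Y : ℝ → ℝ} {t b : ℝ} (ht : 0 ≤ t)
    (hX : BddBelow (X '' Icc 0 t)) (hY : BddBelow (Y '' Icc 0 t))
    (hXY : ∀ u ∈ Icc 0 t, |X u - Y u| ≤ b) :
    |Psi X t - Psi Y t| ≤ b := by
  have hne : (Icc 0 t).Nonempty := Set.nonempty_Icc.2 ht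
  have h₁ := csInf_image_le_csInf_image_add (Y := Y) (b := b) hne hX fun u hu => by
    linarith [(abs_le.1 (hXY u hu)).2]
  have h₂ := csInf_image_le_csInf_image_add (Y := X) (b := b) hne hY fun u hu => by
    linarith [(abs_le.1 (hXY u hu)).1]
  rw [abs_le]
  constructor <;> simp only [Psi] <;> linarith

lemma abs_Phi_sub_Phi_le {X Y : ℝ → ℝ} {t b : ℝ} (ht : 0 ≤ t)
    (hX : BddBelow (X '' Icc 0 t)) (hY : BddBelow (Y '' Icc 0 t))
    (hXY : ∀ u ∈ Icc 0 t, |X u - Y u| ≤ b) :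
    |Phi X t - Phi Y t| ≤ 2 * b := by
  calc |Phi X t - Phi Y t| = |(X t - Y t) + (Psi X t - Psi Y t)| := by
        rw [Phi, Phi]; congr 1; ring
    _ ≤ |X t - Y t| + |Psi X t - Psi Y t| := abs_add_le _ _
    _ ≤ b + b := add_le_add (hXY t ⟨ht, le_rfl⟩) (abs_Psi_sub_Psi_le ht hX hY hXY)
    _ = 2 * b := by ring

lemma Psi_monotoneOn {X : ℝ → ℝ} {T : ℝ} (hX : BddBelow (X '' Icc 0 T)) :
    MonotoneOn (Psi X) (Icc 0 T) := by
  intro a ha b hb hab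
  have hbdd : BddBelow (X '' Icc 0 b) :=
    hX.mono (image_mono (Icc_subset_Icc le_rfl hb.2))
  exact neg_le_neg <| csInf_le_csInf hbdd ((Set.nonempty_Icc.2 ha.1).image X)
    (image_mono (Icc_subset_Icc le_rfl hab))

lemma Phi_intervalIntegrable {X : ℝ → ℝ} {T t : ℝ} (hX : ContinuousOn X (Icc 0 T))
    (ht : t ∈ Icc 0 T) : IntervalIntegrable (Phi X) volume 0 t := by
  have hsub : uIcc 0 t ⊆ Icc 0 T := by
    rw [uIcc_of_le ht.1]; exact Icc_subset_Icc le_rfl ht.2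
  exact ((hX.mono hsub).intervalIntegrable).add
    (((Psi_monotoneOn (isCompact_Icc.bddBelow_image hX)).mono hsub).intervalIntegrable)

lemma abs_sub_le_mul_integral_majorant {ι : Type*} [Fintype ι] {x y : ι → ℝ → ℝ}
    {T t a b p q : ℝ} {g : ℝ → ℝ}
    (hxc : ∀ l, ContinuousOn (x l) (Icc 0 T)) (hyc : ∀ l, ContinuousOn (y l) (Icc 0 T))
    (ht : t ∈ Icc 0 T) (hg : MonotoneOn g (Icc 0 T))
    (hxy : ∀ l, ∀ u ∈ Icc 0 T, |x l u - y l u| ≤ g u)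
    (hp : p = a * (∫ s in (0:ℝ)..t, (1 - ∑ l, Phi (x l) s)) - b * t)
    (hq : q = a * (∫ s in (0:ℝ)..t, (1 - ∑ l, Phi (y l) s)) - b * t) :
    |p - q| ≤ |a| * (2 * Fintype.card ι) * ∫ s in (0:ℝ)..t, g s := by
  have hF : IntervalIntegrable (fun s => ∑ l, Phi (x l) s) volume 0 t :=
    by simpa only [Finset.sum_fn] using
      IntervalIntegrable.sum univ fun l _ => Phi_intervalIntegrable (hxc l) ht
  have hG : IntervalIntegrable (fun s => ∑ l, Phi (y l) s) volume 0 t :=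
    by simpa only [Finset.sum_fn] using
      IntervalIntegrable.sum univ fun l _ => Phi_intervalIntegrable (hyc l) ht
  have hdiff : p - q = a * ∫ s in (0:ℝ)..t, (∑ l, Phi (y l) s - ∑ l, Phi (x l) s) := by
    rw [hp, hq, integral_sub hG hF, integral_sub intervalIntegrable_const hF,
      integral_sub intervalIntegrable_const hG]
    ring
  have hpointwise : ∀ s ∈ Icc 0 t,
      |∑ l, Phi (y l) s - ∑ l, Phi (x l) s| ≤ 2 * Fintype.card ι * g s := by
    intro s hs
    have hsT : Icc 0 s ⊆ Icc 0 T := Icc_subset_Icc le_rfl (hs.2.trans ht.2)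
    calc |∑ l, Phi (y l) s - ∑ l, Phi (x l) s|
        ≤ ∑ l, |Phi (y l) s - Phi (x l) s| := by
          rw [← Finset.sum_sub_distrib]; exact Finset.abs_sum_le_sum_abs _ _
      _ ≤ ∑ _l : ι, 2 * g s := Finset.sum_le_sum fun l _ =>
          abs_Phi_sub_Phi_le hs.1 (isCompact_Icc.bddBelow_image ((hyc l).mono hsT))
            (isCompact_Icc.bddBelow_image ((hxc l).mono hsT)) fun u hu => by
              rw [abs_sub_comm]
              exact (hxy l u (hsT hu)).trans (hg (hsT hu) (hsT ⟨hs.1, le_rfl⟩) hu.2)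
      _ = 2 * Fintype.card ι * g s := by
          rw [Finset.sum_const, Finset.card_univ, nsmul_eq_mul]; ring
  have hgint : IntervalIntegrable g volume 0 t := by
    refine (hg.mono ?_).intervalIntegrable
    rw [uIcc_of_le ht.1]; exact Icc_subset_Icc le_rfl ht.2
  calc |p - q| = |a| * |∫ s in (0:ℝ)..t, (∑ l, Phi (y l) s - ∑ l, Phi (x l) s)| := by
        rw [hdiff, abs_mul]
    _ ≤ |a| * ∫ s in (0:ℝ)..t, 2 * Fintype.card ι * g s := by
        gcongr
        refine (abs_integral_le_integral_abs ht.1).trans ?_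
        exact integral_mono_on ht.1 (hG.sub hF).abs (hgint.const_mul _) hpointwise
    _ = |a| * (2 * Fintype.card ι) * ∫ s in (0:ℝ)..t, g s := by
        rw [intervalIntegral.integral_const_mul]; ring

lemma mul_integral_mul_pow_div_factorial (C K t : ℝ) (n : ℕ) :
    K * ∫ s in (0:ℝ)..t, C * (K * s) ^ n / n.factorial
      = C * (K * t) ^ (n + 1) / (n + 1).factorial := by
  simp_rw [mul_pow, intervalIntegral.integral_div, intervalIntegral.integral_const_mul,
    integral_pow]
  push_cast [Nat.factorial_succ]
  field_simp
  ring

/-- Gronwall's lemma, proved by Picard iteration. The hypothesis is only asked of nondecreasing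
majorants `g`, since estimates through the running infimum in `Ψ` only provide those. -/
lemma le_zero_of_le_mul_integral_majorant {e : ℝ → ℝ} {T K C : ℝ} (hK : 0 ≤ K)
    (hC : ∀ t ∈ Icc 0 T, e t ≤ C)
    (hstep : ∀ g : ℝ → ℝ, MonotoneOn g (Icc 0 T) → (∀ t ∈ Icc 0 T, e t ≤ g t) →
      ∀ t ∈ Icc 0 T, e t ≤ K * ∫ s in (0:ℝ)..t, g s) :
    ∀ t ∈ Icc 0 T, e t ≤ 0 := by
  set C' := max C 0
  have hiter : ∀ n : ℕ, ∀ t ∈ Icc 0 T, e t ≤ C' * (K * t) ^ n / n.factorial := by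
    intro n
    induction n with
    | zero =>
      intro t ht
      simp only [pow_zero, mul_one, Nat.factorial_zero, Nat.cast_one, div_one]
      exact (hC t ht).trans (le_max_left C 0)
    | succ n ih =>
      intro t ht
      rw [← mul_integral_mul_pow_div_factorial]
      refine hstep _ ?_ ih t ht
      intro a ha b _ hab
      have hC' : 0 ≤ C' := le_max_right C 0
      have ha₀ : 0 ≤ a := ha.1
      dsimp only
      gcongr
  intro t ht
  have hlim : Filter.Tendsto (fun n : ℕ => C' * (K * t) ^ n / n.factorial)
      Filter.atTop (nhds 0) := by
    simpa [mul_div_assoc] using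
      (FloorSemiring.tendsto_pow_div_factorial_atTop (K * t)).const_mul C'
  exact ge_of_tendsto' hlim fun n => hiter n t ht

theorem fluid_limit_system_unique_general
    (k : ℕ) (T : ℝ)
    (μ ϱ : Fin k → ℝ)
    (x y : Fin k → ℝ → ℝ)
    (hxc : ∀ j, ContinuousOn (x j) (Set.Icc 0 T))
    (hyc : ∀ j, ContinuousOn (y j) (Set.Icc 0 T))
    (hx : ∀ j, ∀ t ∈ Set.Icc (0:ℝ) T,
      x j t = ϱ j * μ j * (∫ s in (0:ℝ)..t, (1 - ∑ l, Phi (x l) s)) - μ j * t)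
    (hy : ∀ j, ∀ t ∈ Set.Icc (0:ℝ) T,
      y j t = ϱ j * μ j * (∫ s in (0:ℝ)..t, (1 - ∑ l, Phi (y l) s)) - μ j * t) :
    ∀ j, ∀ t ∈ Set.Icc (0:ℝ) T, x j t = y j t := by
  set e : ℝ → ℝ := fun t => ∑ j, |x j t - y j t|
  have he_cont : ContinuousOn e (Icc 0 T) :=
    continuousOn_finsetSum _ fun j _ => ((hxc j).sub (hyc j)).abs
  obtain ⟨C, hC⟩ := isCompact_Icc.bddAbove_image he_cont
  have hterm_le : ∀ j t, |x j t - y j t| ≤ e t := fun j t =>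
    Finset.single_le_sum (f := fun j => |x j t - y j t|) (fun _ _ => abs_nonneg _) (mem_univ j)
  have he_nonpos := le_zero_of_le_mul_integral_majorant (e := e) (C := C)
    (K := (∑ j, |ϱ j * μ j|) * (2 * k)) (by positivity) (fun t ht => hC ⟨t, ht, rfl⟩)
    fun g hg heg t ht => by
      rw [Finset.sum_mul, Finset.sum_mul]
      refine Finset.sum_le_sum fun j _ => ?_
      simpa only [Fintype.card_fin] using abs_sub_le_mul_integral_majorant hxc hyc ht hg
        (fun l u hu => (hterm_le l u).trans (heg u hu)) (hx j t ht) (hy j t ht)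
  intro j t ht
  exact sub_eq_zero.1 (abs_nonpos_iff.1 ((hterm_le j t).trans (he_nonpos t ht)))

/-- Uniqueness for the fluid-limit system (asserted after paper eqs. (3.26)–(3.27)). -/
theorem fluid_limit_system_unique
    (k : ℕ) (hk : 1 ≤ k) (T : ℝ) (hT : 0 < T)
    (μ ϱ : Fin k → ℝ) (hμ : ∀ j, 0 < μ j) (hϱ : ∀ j, 0 < ϱ j)
    (x y : Fin k → ℝ → ℝ)
    (hxc : ∀ j, ContinuousOn (x j) (Set.Icc 0 T))
    (hyc : ∀ j, ContinuousOn (y j) (Set.Icc 0 T))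
    (hx0 : ∀ j, x j 0 = 0) (hy0 : ∀ j, y j 0 = 0)
    (hx : ∀ j, ∀ t ∈ Set.Icc (0:ℝ) T,
      x j t = ϱ j * μ j * (∫ s in (0:ℝ)..t, (1 - ∑ l, Phi (x l) s)) - μ j * t)
    (hy : ∀ j, ∀ t ∈ Set.Icc (0:ℝ) T,
      y j t = ϱ j * μ j * (∫ s in (0:ℝ)..t, (1 - ∑ l, Phi (y l) s)) - μ j * t) :
    ∀ j, ∀ t ∈ Set.Icc (0:ℝ) T, x j t = y j t :=
  fluid_limit_system_unique_general k T μ ϱ x y hxc hyc hx hy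
end

section
/- Lemma 3.1 (inverse-process convergence, in probability): let (Ω, ℱ, P) be a probability space, and for each N ≥ 1 let A^N : Ω × [0,∞) → [0,∞) be such that for each ω the path t ↦ A^N_t(ω) is nondecreasing and right-continuous with A^N_0(ω) = 0, and for each t the map ω ↦ A^N_t(ω) is measurable. Define B^N_t(ω) = inf{ s ≥ 0 : A^N_s(ω) > t } ∈ [0,∞] (with inf ∅ = ∞). Let a > 0 and let S ⊆ [0,∞) be dense. Suppose that for every t ∈ S, B^N_t → a·t in probability as N → ∞ (i.e. for every ε > 0, P{ |B^N_t − a t| > ε } → 0, where the event includes {B^N_t = ∞}). Then for every T > 0 and every ε > 0, P{ sup_{t∈[0,T]} |A^N_t − t/a| > ε } → 0 as N → ∞. -/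
/-!
On the event that the inverse `B` is within `a δ` of `a v` at every point `v` of a finite
`δ`-net `F ⊆ S` of `[0, T/a + δ]`, the path `A` is pinned to `t ↦ t / a` up to `2δ` on `[0, T]`:
`B v > t` forces `A t ≤ v`, and `B v < t` forces `A t > v`, so the net points just above and just
below `t / a` sandwich `A t`. The complement of that event is a finite union of events whose
probabilities tend to zero.
-/

open Set Filter MeasureTheory Topology

noncomputable def generalizedInverse (f : ℝ → ℝ) (v : ℝ) : ENNReal :=
  ⨅ s ∈ {s : ℝ | 0 ≤ s ∧ v < f s}, ENNReal.ofReal s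

section GeneralizedInverse

variable {f : ℝ → ℝ} {v t : ℝ}

theorem generalizedInverse_le_ofReal (ht : 0 ≤ t) (hv : v < f t) :
    generalizedInverse f v ≤ ENNReal.ofReal t :=
  iInf₂_le t ⟨ht, hv⟩

theorem lt_of_generalizedInverse_lt_ofReal (hf : MonotoneOn f (Ici 0))
    (h : generalizedInverse f v < ENNReal.ofReal t) : v < f t := by
  obtain ⟨s, ⟨hs0, hvs⟩, hst⟩ := by simpa only [generalizedInverse, iInf_lt_iff] using h
  have hst : s < t := (ENNReal.ofReal_lt_ofReal_iff'.mp hst).1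
  exact hvs.trans_le (hf hs0 (hs0.trans hst.le) hst.le)

theorem le_of_lt_toReal_generalizedInverse (hv : generalizedInverse f v ≠ ⊤) (ht0 : 0 ≤ t)
    (ht : t < (generalizedInverse f v).toReal) : f t ≤ v := by
  by_contra! hlt
  have := (generalizedInverse_le_ofReal ht0 hlt).trans_lt
    ((ENNReal.ofReal_lt_iff_lt_toReal ht0 hv).mpr ht)
  exact this.false

theorem lt_of_toReal_generalizedInverse_lt (hf : MonotoneOn f (Ici 0))
    (hv : generalizedInverse f v ≠ ⊤) (ht : (generalizedInverse f v).toReal < t) : v < f t :=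
  lt_of_generalizedInverse_lt_ofReal hf ((ENNReal.lt_ofReal_iff_toReal_lt hv).mpr ht)

theorem abs_sub_div_lt_of_generalizedInverse_near (hf0 : ∀ t, 0 ≤ t → 0 ≤ f t)
    (hf : MonotoneOn f (Ici 0)) {a δ : ℝ} (ha : 0 < a) (hδ : 0 ≤ δ) (ht : 0 ≤ t)
    {F : Set ℝ}
    (hF : ∀ y ∈ Icc 0 (t / a + δ), ∃ v ∈ F, v ∈ Ioo y (y + δ))
    (hnear : ∀ v ∈ F, generalizedInverse f v ≠ ⊤ ∧
      |(generalizedInverse f v).toReal - a * v| ≤ a * δ) :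
    |f t - t / a| < 2 * δ := by
  have hta : a * (t / a) = t := mul_div_cancel₀ t ha.ne'
  obtain ⟨v, hvF, hv₁, hv₂⟩ := hF (t / a + δ) ⟨by positivity, le_rfl⟩
  have hupper : f t ≤ v := by
    obtain ⟨hv, hvnear⟩ := hnear v hvF
    refine le_of_lt_toReal_generalizedInverse hv ht ?_
    nlinarith [(abs_le.mp hvnear).1]
  have hlower : t / a - 2 * δ < f t := by
    rcases lt_or_ge (t / a) (2 * δ) with hsmall | hlarge
    · linarith [hf0 t ht]
    obtain ⟨w, hwF, hw₁, hw₂⟩ := hF (t / a - 2 * δ) ⟨by linarith, by linarith⟩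
    obtain ⟨hw, hwnear⟩ := hnear w hwF
    have : w < f t := lt_of_toReal_generalizedInverse_lt hf hw (by
      nlinarith [(abs_le.mp hwnear).2])
    linarith
  exact abs_sub_lt_iff.mpr ⟨by linarith, by linarith⟩

end GeneralizedInverse

theorem exists_finset_subset_forall_exists_mem_Ioo {S : Set ℝ}
    (hS : ∀ x ∈ Ici (0 : ℝ), x ∈ closure S) {δ : ℝ} (hδ : 0 < δ) (X : ℝ) :
    ∃ F : Finset ℝ, ↑F ⊆ S ∧ ∀ y ∈ Icc 0 X, ∃ v ∈ F, v ∈ Ioo y (y + δ) := by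
  have hu : ∀ j : ℕ, ∃ v ∈ S, v ∈ Ioo (j * (δ / 2)) (j * (δ / 2) + δ / 2) := fun j =>
    (mem_closure_iff.mp (hS (j * (δ / 2) + δ / 4) (by rw [mem_Ici]; positivity))) _ isOpen_Ioo
      ⟨by linarith, by linarith⟩ |>.imp fun _ h => ⟨h.2, h.1⟩
  choose u huS huI using hu
  refine ⟨(Finset.range (⌈X / (δ / 2)⌉₊ + 1)).image u, ?_, ?_⟩
  · intro _ hv
    obtain ⟨j, -, rfl⟩ := Finset.mem_image.mp hv
    exact huS j
  intro y ⟨hy0, hyX⟩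
  set j := ⌈y / (δ / 2)⌉₊
  have hjy : y ≤ j * (δ / 2) := (div_le_iff₀ (by positivity)).mp (Nat.le_ceil _)
  have hjy' : j * (δ / 2) < y + δ / 2 :=
    calc j * (δ / 2) < (y / (δ / 2) + 1) * (δ / 2) :=
          mul_lt_mul_of_pos_right (Nat.ceil_lt_add_one (by positivity)) (by positivity)
      _ = y + δ / 2 := by field_simp
  have hjm : j < ⌈X / (δ / 2)⌉₊ + 1 :=
    Nat.lt_succ_of_le (Nat.ceil_mono (div_le_div_of_nonneg_right hyX (by positivity)))
  exact ⟨u j, Finset.mem_image_of_mem u (Finset.mem_range.mpr hjm),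
    by linarith [(huI j).1], by linarith [(huI j).2]⟩

theorem tendsto_measure_zero_of_subset_biUnion {α ι Ω : Type*} [MeasurableSpace Ω]
    {μ : Measure Ω} {l : Filter α} {E : α → Set Ω} {G : ι → α → Set Ω} (s : Finset ι)
    (hE : ∀ n, E n ⊆ ⋃ i ∈ s, G i n) (hG : ∀ i ∈ s, Tendsto (fun n => μ (G i n)) l (𝓝 0)) :
    Tendsto (fun n => μ (E n)) l (𝓝 0) := by
  have hsum : Tendsto (fun n => ∑ i ∈ s, μ (G i n)) l (𝓝 0) := by
    simpa using tendsto_finsetSum s hG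
  exact tendsto_of_tendsto_of_tendsto_of_le_of_le tendsto_const_nhds hsum (fun _ => zero_le)
    fun n => (measure_mono (hE n)).trans (measure_biUnion_finset_le s _)

theorem inverse_process_convergence_in_probability_general
    {Ω : Type*} [MeasurableSpace Ω] (P : Measure Ω)
    (A : ℕ → Ω → ℝ → ℝ)
    (hApos : ∀ N ω t, 0 ≤ t → 0 ≤ A N ω t)
    (hAmono : ∀ N ω, MonotoneOn (A N ω) (Set.Ici 0))
    (B : ℕ → Ω → ℝ → ENNReal)
    (hB : ∀ N ω t, B N ω t = ⨅ s ∈ {s : ℝ | 0 ≤ s ∧ t < A N ω s}, ENNReal.ofReal s)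
    (a : ℝ) (ha : 0 < a)
    (S : Set ℝ)
    (hSdense : ∀ x ∈ Set.Ici (0:ℝ), x ∈ closure S)
    (hconv : ∀ t ∈ S, ∀ ε > (0:ℝ),
      Tendsto
        (fun N => P {ω | B N ω t = ⊤ ∨ ε < |(B N ω t).toReal - a * t|})
        atTop (nhds 0)) :
    ∀ T > (0:ℝ), ∀ ε > (0:ℝ),
      Tendsto (fun N => P {ω | ∃ t ∈ Set.Icc (0:ℝ) T, ε < |A N ω t - t / a|})
        atTop (nhds 0) := by
  intro T _ ε hε
  have hBinv : ∀ N ω, B N ω = generalizedInverse (A N ω) := fun N ω => funext (hB N ω)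
  obtain ⟨F, hFS, hF⟩ := exists_finset_subset_forall_exists_mem_Ioo hSdense (half_pos hε)
    (T / a + ε / 2)
  refine tendsto_measure_zero_of_subset_biUnion F (fun N ω ⟨t, ⟨ht0, htT⟩, hfar⟩ => ?_)
    fun v hv => hconv v (hFS hv) (a * (ε / 2)) (by positivity)
  by_contra hall
  simp only [mem_iUnion, mem_ofPred_eq, not_exists, not_or, not_lt, hBinv] at hall
  have hclose := abs_sub_div_lt_of_generalizedInverse_near (hApos N ω) (hAmono N ω) ha
    (half_pos hε).le ht0 (fun y hy => hF y ⟨hy.1, hy.2.trans (by gcongr)⟩) hall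
  linarith

/-- Lemma 3.1 of the paper (inverse-process convergence, in probability):
if the generalized inverses `B^N_t = inf{s ≥ 0 : A^N_s > t}` (valued in `ℝ≥0∞`,
with `inf ∅ = ∞`) converge in probability to `a·t` for each `t` in a dense subset
of `[0,∞)` (the exceptional event includes `{B^N_t = ∞}`), then
`sup_{t∈[0,T]} |A^N_t − t/a| → 0` in probability for every `T > 0`. -/
theorem inverse_process_convergence_in_probability
    {Ω : Type*} [MeasurableSpace Ω] (P : Measure Ω) [IsProbabilityMeasure P]
    (A : ℕ → Ω → ℝ → ℝ)
    (hApos : ∀ N ω t, 0 ≤ t → 0 ≤ A N ω t)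
    (hAmono : ∀ N ω, MonotoneOn (A N ω) (Set.Ici 0))
    (hArc : ∀ N ω t, 0 ≤ t → ContinuousWithinAt (A N ω) (Set.Ici t) t)
    (hA0 : ∀ N ω, A N ω 0 = 0)
    (hAmeas : ∀ N t, Measurable fun ω => A N ω t)
    (B : ℕ → Ω → ℝ → ENNReal)
    (hB : ∀ N ω t, B N ω t = ⨅ s ∈ {s : ℝ | 0 ≤ s ∧ t < A N ω s}, ENNReal.ofReal s)
    (a : ℝ) (ha : 0 < a)
    (S : Set ℝ) (hS : S ⊆ Set.Ici 0)
    (hSdense : ∀ x ∈ Set.Ici (0:ℝ), x ∈ closure S)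
    (hconv : ∀ t ∈ S, ∀ ε > (0:ℝ),
      Tendsto
        (fun N => P {ω | B N ω t = ⊤ ∨ ε < |(B N ω t).toReal - a * t|})
        atTop (nhds 0)) :
    ∀ T > (0:ℝ), ∀ ε > (0:ℝ),
      Tendsto (fun N => P {ω | ∃ t ∈ Set.Icc (0:ℝ) T, ε < |A N ω t - t / a|})
        atTop (nhds 0) :=
  inverse_process_convergence_in_probability_general P A hApos hAmono B hB a ha S hSdense hconv
end

section
/- Deterministic core of Lemma 3.1: for each N ≥ 1 let A^N : [0,∞) → [0,∞) be nondecreasing and right-continuous with A^N(0) = 0, and define B^N(t) = inf{ s ≥ 0 : A^N(s) > t } ∈ [0,∞] (with inf ∅ = ∞). Let a > 0 and let S ⊆ [0,∞) be dense. If B^N(t) → a·t as N → ∞ for every t ∈ S, then for every T > 0, sup_{t∈[0,T]} |A^N(t) − t/a| → 0 as N → ∞. -/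
open Set Filter Topology

/-- Deterministic core of Lemma 3.1: if the generalized inverses
`B^N(t) = inf{s ≥ 0 : A^N(s) > t}` (valued in `ℝ≥0∞`, with `inf ∅ = ∞`)
converge to `a·t` for every `t` in a dense subset of `[0,∞)`, then
`A^N → t/a` uniformly on every `[0,T]`. -/
theorem inverse_process_convergence_deterministic
    (A : ℕ → ℝ → ℝ)
    (hApos : ∀ N t, 0 ≤ t → 0 ≤ A N t)
    (hAmono : ∀ N, MonotoneOn (A N) (Set.Ici 0))
    (hArc : ∀ N t, 0 ≤ t → ContinuousWithinAt (A N) (Set.Ici t) t)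
    (hA0 : ∀ N, A N 0 = 0)
    (B : ℕ → ℝ → ENNReal)
    (hB : ∀ N t, B N t = ⨅ s ∈ {s : ℝ | 0 ≤ s ∧ t < A N s}, ENNReal.ofReal s)
    (a : ℝ) (ha : 0 < a)
    (S : Set ℝ) (hS : S ⊆ Set.Ici 0)
    (hSdense : ∀ x ∈ Set.Ici (0:ℝ), x ∈ closure S)
    (hconv : ∀ t ∈ S, Tendsto (fun N => B N t) atTop (nhds (ENNReal.ofReal (a * t)))) :
    ∀ T > (0:ℝ), TendstoUniformlyOn (fun N t => A N t) (fun t => t / a) atTop (Set.Icc 0 T) := by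
  -- inversion fact 1: if t < A N s then B N t ≤ s
  have fact1 : ∀ N t s, 0 ≤ s → t < A N s → B N t ≤ ENNReal.ofReal s := by
    intro N t s hs hts
    rw [hB]
    exact iInf₂_le s ⟨hs, hts⟩
  -- inversion fact 2: if B N t < s then t < A N s
  have fact2 : ∀ N t s, 0 ≤ s → B N t < ENNReal.ofReal s → t < A N s := by
    intro N t s hs hlt
    rw [hB] at hlt
    simp only [iInf_lt_iff, exists_prop, Set.mem_setOf_eq] at hlt
    obtain ⟨s', ⟨hs'0, hts'⟩, hlt'⟩ := hlt
    have hs's : s' < s := (ENNReal.ofReal_lt_ofReal_iff_of_nonneg hs'0).mp hlt'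
    exact lt_of_lt_of_le hts' (hAmono N hs'0 hs hs's.le)
  -- density helper
  have hdense : ∀ u v : ℝ, max u 0 < v → ∃ t ∈ S, u < t ∧ t < v := by
    intro u v huv
    set x := (max u 0 + v) / 2 with hx
    have hx0 : (0:ℝ) ≤ x := by
      have : (0:ℝ) ≤ max u 0 := le_max_right _ _
      nlinarith
    have hxmem : x ∈ Set.Ioo u v := by
      constructor
      · have : u ≤ max u 0 := le_max_left _ _
        nlinarith
      · nlinarith
    have := hSdense x hx0
    rw [mem_closure_iff] at this
    obtain ⟨t, htIoo, htS⟩ := this (Set.Ioo u v) isOpen_Ioo hxmem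
    exact ⟨t, htS, htIoo.1, htIoo.2⟩
  -- pointwise convergence, in eventual form
  have key : ∀ s : ℝ, 0 ≤ s → ∀ ε : ℝ, 0 < ε → ∀ᶠ N in atTop, |A N s - s / a| < ε := by
    intro s hs ε hε
    have hsa : 0 ≤ s / a := div_nonneg hs ha.le
    -- upper bound
    have hupper : ∀ᶠ N in atTop, A N s < s / a + ε := by
      obtain ⟨t, htS, ht1, ht2⟩ := hdense (s / a) (s / a + ε) (by
        rw [max_eq_left hsa]; linarith)
      have hat : s < a * t := by
        have := (div_lt_iff₀ ha).mp ht1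
        linarith [this]
      have hofs : ENNReal.ofReal s < ENNReal.ofReal (a * t) :=
        (ENNReal.ofReal_lt_ofReal_iff_of_nonneg hs).mpr hat
      have hev := (hconv t htS).eventually (eventually_gt_nhds hofs)
      filter_upwards [hev] with N hN
      by_contra hcon
      push_neg at hcon
      have htA : t < A N s := lt_of_lt_of_le ht2 hcon
      exact absurd (fact1 N t s hs htA) (not_le.mpr hN)
    -- lower bound
    have hlower : ∀ᶠ N in atTop, s / a - ε < A N s := by
      by_cases hc : s / a - ε < 0
      · filter_upwards with N
        exact lt_of_lt_of_le hc (hApos N s hs)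
      · push_neg at hc
        obtain ⟨t, htS, ht1, ht2⟩ := hdense (s / a - ε) (s / a) (by
          rw [max_eq_left hc]; linarith)
        have hta : a * t < s := by
          have := (lt_div_iff₀ ha).mp ht2
          linarith [this]
        have hspos : 0 < s := by
          have h1 : (0:ℝ) < s / a := lt_of_le_of_lt (by linarith) ht2
          nlinarith [mul_pos h1 ha, div_mul_cancel₀ s ha.ne']
        have hof : ENNReal.ofReal (a * t) < ENNReal.ofReal s :=
          ENNReal.ofReal_lt_ofReal_iff hspos |>.mpr hta
        have hev := (hconv t htS).eventually (eventually_lt_nhds hof)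
        filter_upwards [hev] with N hN
        exact lt_trans ht1 (fact2 N t s hspos.le hN)
    filter_upwards [hupper, hlower] with N h1 h2
    rw [abs_sub_lt_iff]
    constructor <;> linarith
  -- Polya argument: uniform convergence on [0, T]
  intro T hT
  rw [Metric.tendstoUniformlyOn_iff]
  intro ε hε
  have hε2 : 0 < ε / 2 := by linarith
  obtain ⟨n, hn⟩ := exists_nat_gt (T / (a * (ε / 2)))
  have hden : 0 < a * (ε / 2) := by positivity
  have hnpos : 0 < (n : ℝ) := lt_trans (div_pos hT hden) hn
  have hTn : T / n < a * (ε / 2) := by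
    rw [div_lt_iff₀ hnpos]
    calc T = (T / (a * (ε / 2))) * (a * (ε / 2)) := by field_simp
    _ < n * (a * (ε / 2)) := by
        apply mul_lt_mul_of_pos_right hn hden
    _ = a * (ε / 2) * n := by ring
  -- grid points
  have hgrid : ∀ j : ℕ, (0:ℝ) ≤ j * T / n := by
    intro j; positivity
  have hev : ∀ᶠ N in atTop, ∀ j ∈ Finset.range (n + 2),
      |A N (j * T / n) - (j * T / n) / a| < ε / 2 := by
    rw [Filter.eventually_all_finset]
    intro j _
    exact key (j * T / n) (hgrid j) (ε / 2) hε2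
  filter_upwards [hev] with N hN t ht
  obtain ⟨ht0, htT⟩ := ht
  -- locate t in the grid
  set i : ℕ := (⌊t * n / T⌋).toNat with hi
  have hfl0 : (0:ℤ) ≤ ⌊t * n / T⌋ := by
    apply Int.floor_nonneg.mpr
    positivity
  have hile : (i : ℝ) ≤ t * n / T := by
    rw [hi]
    rw [show ((⌊t * n / T⌋.toNat : ℕ) : ℝ) = ((⌊t * n / T⌋ : ℤ) : ℝ) by
      exact_mod_cast congrArg (fun z : ℤ => (z : ℝ)) (Int.toNat_of_nonneg hfl0)]
    exact Int.floor_le _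
  have hilt : t * n / T < (i : ℝ) + 1 := by
    rw [hi]
    rw [show ((⌊t * n / T⌋.toNat : ℕ) : ℝ) = ((⌊t * n / T⌋ : ℤ) : ℝ) by
      exact_mod_cast congrArg (fun z : ℤ => (z : ℝ)) (Int.toNat_of_nonneg hfl0)]
    exact Int.lt_floor_add_one _
  have hiln : i ≤ n := by
    have h1 : (i : ℝ) ≤ (n : ℝ) := by
      calc (i : ℝ) ≤ t * n / T := hile
      _ ≤ T * n / T := by gcongr
      _ = n := by field_simp
    exact_mod_cast h1
  have hxi_le : (i : ℝ) * T / n ≤ t := by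
    rw [div_le_iff₀ hnpos] at *
    have := hile
    rw [le_div_iff₀ hT] at this
    nlinarith
  have hxi1_gt : t < ((i : ℝ) + 1) * T / n := by
    rw [lt_div_iff₀ hnpos]
    rw [div_lt_iff₀ hT] at hilt
    nlinarith
  -- bounds from the grid
  have hNi := hN i (Finset.mem_range.mpr (by omega))
  have hNi1 := hN (i + 1) (Finset.mem_range.mpr (by omega))
  rw [abs_sub_lt_iff] at hNi hNi1
  have hcast : ((i + 1 : ℕ) : ℝ) = (i : ℝ) + 1 := by push_cast; ring
  rw [hcast] at hNi1
  have hmono_up : A N t ≤ A N (((i : ℝ) + 1) * T / n) :=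
    hAmono N (Set.mem_Ici.mpr ht0) (Set.mem_Ici.mpr (by positivity)) hxi1_gt.le
  have hmono_lo : A N ((i : ℝ) * T / n) ≤ A N t :=
    hAmono N (Set.mem_Ici.mpr (hgrid i)) (Set.mem_Ici.mpr ht0) hxi_le
  have hTna : T / n / a < ε / 2 := by
    rw [div_lt_iff₀ ha]
    linarith [hTn]
  have hstep : ((i : ℝ) + 1) * T / n / a = (i : ℝ) * T / n / a + T / n / a := by
    field_simp
  have h1 : A N t < t / a + ε := by
    have h2 : (i : ℝ) * T / n / a ≤ t / a := by gcongr
    calc A N t ≤ A N (((i : ℝ) + 1) * T / n) := hmono_up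
    _ < ((i : ℝ) + 1) * T / n / a + ε / 2 := by linarith [hNi1.1]
    _ = (i : ℝ) * T / n / a + T / n / a + ε / 2 := by rw [hstep]
    _ < t / a + ε / 2 + ε / 2 := by linarith
    _ = t / a + ε := by ring
  have h2 : t / a - ε < A N t := by
    have h3 : t / a < (i : ℝ) * T / n / a + T / n / a := by
      rw [← hstep]
      gcongr
    linarith [hNi.2, hmono_lo, hTna]
  rw [Real.dist_eq, abs_sub_lt_iff]
  constructor <;> linarith
end
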